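/- arXiv:1904.07099 — 3 statements merged into one kernel-verified Lean document; each statement's English description precedes it below -/
import Mathlib

section
/- The L-layer linear position-encoding network extracts the inverted-order position of a one-hot vector: let E_L : ℝ^{2^L} → ℝ be the composition of L layers of convolution with the filter (1,2,1) followed by subsampling by 2 (as defined by (Tu)(t) = u(2t−1) + 2u(2t) + u(2t+1), with out-of-range indices treated as 0). Then for every a ∈ {0,…,2^L − 1}, E_L(e_a) = 2^L − a, except when a = 2^L − 1, in which case E_L(e_a) = 1 = 2^L − a as well; i.e., E_L(e_a) = 2^L − a for all a ≤ 2^L − 1 with the convention that positions are indexed from 0 and E_L(e_{2^L−1}) = 1. -/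
/-- One layer of the position-encoding network: convolution with the filter
`(1, 2, 1)` followed by subsampling by 2, out-of-range indices treated as `0`
(vectors are modelled as functions `ℕ → ℝ`; index `2t − 1` is out of range for `t = 0`). -/
noncomputable def posLayer (u : ℕ → ℝ) : ℕ → ℝ := fun t =>
  (if t = 0 then 0 else u (2 * t - 1)) + 2 * u (2 * t) + u (2 * t + 1)

/-- The `L`-layer position-encoding network `E_L`: the `L`-fold composition of `posLayer`. -/
noncomputable def posEnc : ℕ → (ℕ → ℝ) → (ℕ → ℝ)
  | 0, u => u
  | L + 1, u => posEnc L (posLayer u)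

/-- The one-hot vector `e_a` (positions indexed from `0`). -/
noncomputable def oneHot (a : ℕ) : ℕ → ℝ := fun i => if i = a then 1 else 0

/-!
A layer is linear and sends `e_{2b}` to `2 e_b` and `e_{2b+1}` to `e_b + e_{b+1}`. Hence the
claim `E_L(e_a) = 2^L − a` propagates from `L` to `L + 1` by induction, provided it is proved
for the closed range `a ≤ 2^L`: the odd case `a = 2^{L+1} − 1` uses the endpoint value
`E_L(e_{2^L}) = 0`.
-/

lemma posLayer_add (u v : ℕ → ℝ) : posLayer (u + v) = posLayer u + posLayer v := by
  funext t
  simp only [posLayer, Pi.add_apply]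
  split_ifs <;> ring

lemma posEnc_add (L : ℕ) (u v : ℕ → ℝ) : posEnc L (u + v) = posEnc L u + posEnc L v := by
  induction L generalizing u v with
  | zero => rfl
  | succ L ih => simp only [posEnc, posLayer_add, ih]

lemma posLayer_oneHot_two_mul (b : ℕ) : posLayer (oneHot (2 * b)) = oneHot b + oneHot b := by
  funext t
  simp only [posLayer, oneHot, Pi.add_apply]
  split_ifs <;> (first | ring1 | omega)

lemma posLayer_oneHot_two_mul_add_one (b : ℕ) :
    posLayer (oneHot (2 * b + 1)) = oneHot b + oneHot (b + 1) := by
  funext t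
  simp only [posLayer, oneHot, Pi.add_apply]
  split_ifs <;> (first | ring1 | omega)

lemma posEnc_oneHot_zero_of_le (L a : ℕ) (ha : a ≤ 2 ^ L) :
    posEnc L (oneHot a) 0 = (2 ^ L : ℝ) - a := by
  induction L generalizing a with
  | zero =>
    interval_cases a <;> simp [posEnc, oneHot]
  | succ L ih =>
    obtain ⟨b, rfl | rfl⟩ := Nat.even_or_odd' a
    · rw [posEnc, posLayer_oneHot_two_mul, posEnc_add, Pi.add_apply, ih b (by omega)]
      push_cast
      ring
    · rw [posEnc, posLayer_oneHot_two_mul_add_one, posEnc_add, Pi.add_apply,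
        ih b (by omega), ih (b + 1) (by omega)]
      push_cast
      ring

/-- The `L`-layer network extracts the inverted-order position of a one-hot vector:
`E_L(e_a) = 2^L − a` for all `0 ≤ a ≤ 2^L − 1` (in particular `E_L(e_{2^L−1}) = 1`). -/
theorem posEnc_onehot (L a : ℕ) (ha : a < 2 ^ L) :
    posEnc L (oneHot a) 0 = (2 ^ L : ℝ) - a :=
  posEnc_oneHot_zero_of_le L a ha.le
end

section
/- The position-encoding network is linear with explicit coefficients: the map E_L : ℝ^{2^L} → ℝ defined by L layers of filtering with (1,2,1) and subsampling by 2 satisfies E_L(x) = Σ_{i=0}^{2^L−1} c_i · x_i where c_i = 2^L − i for i < 2^L − 1 and c_{2^L−1} = 1. -/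
open scoped BigOperators

/-!
Pairing the output of one layer with the triangular weights `n - t` (for `t < n`) is the same as
pairing its input with the triangular weights `2n - j` (for `j < 2n`): the input `u (2s)` only reaches
output `s`, with weight `2(n - s)`, and `u (2s + 1)` reaches outputs `s` and `s + 1`, with total
weight `(n - s) + (n - s - 1)`, or just `1` when `s = n - 1`. Starting from the weight `1` on the
single output of `E_L` and pulling back through `L` layers gives the weights `2^L - i`, the last of
which is `1`.
-/

open Finset

lemma sum_range_succ_posLayer (u : ℕ → ℝ) (n : ℕ) :
    ∑ t ∈ range (n + 1), posLayer u t = 2 * ∑ j ∈ range (2 * n + 1), u j + u (2 * n + 1) := by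
  induction n with
  | zero => simp [posLayer]
  | succ n ih =>
    rw [sum_range_succ, ih, show 2 * (n + 1) + 1 = 2 * n + 1 + 1 + 1 by ring,
      sum_range_succ _ (2 * n + 1 + 1), sum_range_succ _ (2 * n + 1)]
    simp only [posLayer, Nat.add_one_ne_zero, if_false, show 2 * (n + 1) - 1 = 2 * n + 1 by omega]
    ring_nf

lemma sum_range_sub_mul_posLayer (u : ℕ → ℝ) (n : ℕ) :
    ∑ t ∈ range n, ((n : ℝ) - t) * posLayer u t = ∑ j ∈ range (2 * n), ((2 * n : ℝ) - j) * u j := by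
  induction n with
  | zero => simp
  | succ n ih =>
    have hl : ∑ t ∈ range (n + 1), (((n + 1 : ℕ) : ℝ) - t) * posLayer u t =
        ∑ t ∈ range (n + 1), ((n : ℝ) - t) * posLayer u t + ∑ t ∈ range (n + 1), posLayer u t := by
      rw [← sum_add_distrib]
      exact sum_congr rfl fun t _ => by push_cast; ring
    have hr : ∑ j ∈ range (2 * (n + 1)), ((2 * (n + 1 : ℕ) : ℝ) - j) * u j =
        ∑ j ∈ range (2 * n + 2), ((2 * n : ℝ) - j) * u j + 2 * ∑ j ∈ range (2 * n + 2), u j := by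
      rw [mul_sum, ← sum_add_distrib]
      exact sum_congr rfl fun j _ => by push_cast; ring
    rw [hl, hr, sum_range_succ_posLayer, sum_range_succ, ih]
    simp only [sum_range_succ]
    push_cast
    ring

lemma posEnc_apply_zero (L : ℕ) (u : ℕ → ℝ) :
    posEnc L u 0 = ∑ i ∈ range (2 ^ L), ((2 : ℝ) ^ L - i) * u i := by
  induction L generalizing u with
  | zero => simp [posEnc]
  | succ L ih =>
    have h := sum_range_sub_mul_posLayer u (2 ^ L)
    push_cast at h
    rw [posEnc, ih, h, pow_succ', pow_succ']

theorem posEnc_linear_coeffs_general (L : ℕ) (x : ℕ → ℝ) :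
    posEnc L x 0 =
      ∑ i ∈ Finset.range (2 ^ L),
        (if i = 2 ^ L - 1 then (1 : ℝ) else (2 ^ L : ℝ) - i) * x i := by
  rw [posEnc_apply_zero]
  refine sum_congr rfl fun i _ => ?_
  split_ifs with h_last
  · rw [h_last, Nat.cast_pred (Nat.two_pow_pos L)]
    push_cast
    ring
  · rfl

/-- The position-encoding network is linear with explicit coefficients:
for `x ∈ ℝ^{2^L}`, `E_L(x) = Σ_{i=0}^{2^L−1} c_i x_i` where `c_i = 2^L − i` for
`i < 2^L − 1` and `c_{2^L−1} = 1`. -/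
theorem posEnc_linear_coeffs (L : ℕ) (x : ℕ → ℝ)
    (hx : ∀ i, 2 ^ L ≤ i → x i = 0) :
    posEnc L x 0 =
      ∑ i ∈ Finset.range (2 ^ L),
        (if i = 2 ^ L - 1 then (1 : ℝ) else (2 ^ L : ℝ) - i) * x i :=
  posEnc_linear_coeffs_general L x
end

section
/- Induction step for odd positions: suppose E_L(e_k) = 2^L − k for all k ∈ {0,…,2^L−1} with the convention E_L(e_{2^L−1}) = 1. For x = e_{2k+1} ∈ ℝ^{2^{L+1}} with 2k+1 < 2^{L+1}−1, the first layer output is e_k + e_{k+1}, and hence E_{L+1}(e_{2k+1}) = (2^L − k) + (2^L − (k+1)) = 2^{L+1} − (2k+1). -/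
lemma posLayer_oneHot_odd (k : ℕ) :
    posLayer (oneHot (2 * k + 1)) = oneHot k + oneHot (k + 1) := by
  funext t
  simp only [posLayer, oneHot, Pi.add_apply]
  split_ifs <;> first | omega | norm_num

lemma posEnc_succ_oneHot_odd (L k : ℕ) :
    posEnc (L + 1) (oneHot (2 * k + 1)) = posEnc L (oneHot k) + posEnc L (oneHot (k + 1)) := by
  rw [posEnc, posLayer_oneHot_odd, posEnc_add]

/-- Induction step for odd positions: if `E_L(e_j) = 2^L − j` for all `j < 2^L`
(with the convention `E_L(e_{2^L−1}) = 1`), then for `x = e_{2k+1} ∈ ℝ^{2^{L+1}}` with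
`2k+1 < 2^{L+1} − 1`, the first-layer output is `e_k + e_{k+1}` (on the valid index
range), and hence `E_{L+1}(e_{2k+1}) = (2^L − k) + (2^L − (k+1)) = 2^{L+1} − (2k+1)`. -/
theorem posEnc_induction_odd (L k : ℕ) (hk : 2 * k + 1 < 2 ^ (L + 1) - 1)
    (hIH : ∀ j, j < 2 ^ L → posEnc L (oneHot j) 0 = (2 ^ L : ℝ) - j) :
    (∀ t, t < 2 ^ L →
        posLayer (oneHot (2 * k + 1)) t = oneHot k t + oneHot (k + 1) t) ∧
    posEnc (L + 1) (oneHot (2 * k + 1)) 0 = (2 ^ (L + 1) : ℝ) - (2 * k + 1) := by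
  refine ⟨fun t _ => by rw [posLayer_oneHot_odd, Pi.add_apply], ?_⟩
  have hk1 : k + 1 < 2 ^ L := by rw [pow_succ] at hk; omega
  rw [posEnc_succ_oneHot_odd, Pi.add_apply, hIH k (by omega), hIH (k + 1) hk1]
  push_cast [pow_succ]
  ring
end
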